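/- arXiv:1306.3954 — 6 statements merged into one kernel-verified Lean document; each statement's English description precedes it below -/
import Mathlib

section
/- Let M be an abelian group, G = M^ℕ, and let ℋ be the family of all subgroups of G that are controllable in G but not uniformly controllable in G. If ℋ is nonempty, then the cardinality of ℋ is at least 2^{|M|} (and 2^{|M|} ≥ 𝔠, the cardinality of the continuum). -/
/-- Projection of an element of the direct product `ℕ → M` to the coordinates
in `J`. -/
def proj {M : Type*} (J : Set ℕ) (g : ℕ → M) : J → M :=
  fun j => g j

/-- A subgroup `H` of the direct product `G = M^ℕ` is *controllable* in `G` if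
`p_J(H) = p_J(H ∩ ⊕_{n ∈ ℕ} M)` for every finite `J ⊆ ℕ`. -/
def Controllable {M : Type*} [AddCommGroup M] (H : AddSubgroup (ℕ → M)) : Prop :=
  ∀ J : Set ℕ, J.Finite →
    proj J '' (H : Set (ℕ → M)) =
      proj J '' ((H : Set (ℕ → M)) ∩ {g | {n | g n ≠ 0}.Finite})

/-- A subgroup `H` of the direct product `G = M^ℕ` is *uniformly controllable*
in `G` if for every finite `J ⊆ ℕ` there is a finite `K ⊆ ℕ` with
`p_J(H) = p_J(H ∩ ⊕_{n ∈ K} M)`. -/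
def UniformlyControllable {M : Type*} [AddCommGroup M]
    (H : AddSubgroup (ℕ → M)) : Prop :=
  ∀ J : Set ℕ, J.Finite → ∃ K : Set ℕ, K.Finite ∧
    proj J '' (H : Set (ℕ → M)) =
      proj J '' ((H : Set (ℕ → M)) ∩ {g | ∀ n ∉ K, g n = 0})

/-!
Spread a controllable, not uniformly controllable `H₀` onto the even coordinates of `M^ℕ` and add
a subgroup `D` of finitely supported sequences vanishing on the even coordinates: `φ(H₀) + D` is
again controllable and not uniformly controllable, and it determines `D`. It therefore suffices to
find `|M|` such sequences none of which lies in the subgroup generated by any set of the others,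
since their subsets generate `2^|M|` different subgroups `D`.

For finite `M` controllability implies uniform controllability, so `M` is infinite. If `M` is
countable, a fixed nonzero element placed in each odd coordinate does the job. Otherwise take a
maximal `ℤ`-linearly independent subset of `M` and `𝔽_p`-bases of the `p`-torsion subgroups `M[p]`,
each in its own odd coordinate: up to `ℵ₀`, their sizes bound `|M|`, because some nonzero multiple
of every element lies in the span of the first family and `|M[n]| ≤ ℵ₀ ⊔ sup_p |M[p]|`.
-/

open Function

universe u

theorem proj_eq_proj_iff {M : Type*} {J : Set ℕ} {g g' : ℕ → M} :
    proj J g = proj J g' ↔ Set.EqOn g g' J :=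
  ⟨fun h j hj => congrFun h ⟨j, hj⟩, fun h => funext fun j => h j.2⟩

section Control

variable {M : Type*} [AddCommGroup M] {H : AddSubgroup (ℕ → M)}

theorem image_proj_eq_image_proj_inter_iff {J : Set ℕ} {P : (ℕ → M) → Prop} :
    proj J '' (H : Set (ℕ → M)) = proj J '' ((H : Set (ℕ → M)) ∩ {g | P g}) ↔
      ∀ g ∈ H, ∃ g' ∈ H, P g' ∧ Set.EqOn g' g J := by
  refine ⟨fun h g hg => ?_, fun h => ?_⟩
  · obtain ⟨g', ⟨hg'H, hg'P⟩, hg'⟩ := h ▸ Set.mem_image_of_mem (proj J) (SetLike.mem_coe.2 hg)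
    exact ⟨g', hg'H, hg'P, proj_eq_proj_iff.1 hg'⟩
  · refine (Set.image_mono Set.inter_subset_left).antisymm' ?_
    rintro _ ⟨g, hg, rfl⟩
    obtain ⟨g', hg'H, hg'P, hg'⟩ := h g hg
    exact ⟨g', ⟨hg'H, hg'P⟩, proj_eq_proj_iff.2 hg'⟩

theorem controllable_iff : Controllable H ↔
    ∀ J : Set ℕ, J.Finite → ∀ g ∈ H, ∃ g' ∈ H, (support g').Finite ∧ Set.EqOn g' g J :=
  forall₂_congr fun _ _ => image_proj_eq_image_proj_inter_iff

theorem uniformlyControllable_iff : UniformlyControllable H ↔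
    ∀ J : Set ℕ, J.Finite → ∃ K : Set ℕ, K.Finite ∧
      ∀ g ∈ H, ∃ g' ∈ H, (∀ n ∉ K, g' n = 0) ∧ Set.EqOn g' g J :=
  forall₂_congr fun _ _ => exists_congr fun _ => and_congr_right' image_proj_eq_image_proj_inter_iff

theorem Controllable.uniformlyControllable [Finite M] (hH : Controllable H) :
    UniformlyControllable H := by
  refine uniformlyControllable_iff.2 fun J hJ => ?_
  have := hJ.to_subtype
  set Y := proj J '' ((H : Set (ℕ → M)) ∩ {g | (support g).Finite})
  choose! w hw hwY using fun y (hy : y ∈ Y) => hy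
  refine ⟨⋃ y ∈ Y, support (w y), (Set.toFinite Y).biUnion fun y hy => (hw y hy).2, fun g hg => ?_⟩
  have hgY : proj J g ∈ Y := (hH J hJ).le ⟨g, hg, rfl⟩
  refine ⟨w _, (hw _ hgY).1, fun n hn => ?_, proj_eq_proj_iff.1 (hwY _ hgY)⟩
  by_contra h
  exact hn (Set.mem_biUnion hgY h)

end Control

section Twist

variable (ι M : Type*) [AddCommGroup M]

def finiteSupport : AddSubgroup (ι → M) where
  carrier := {g | (support g).Finite}
  add_mem' ha hb := (ha.union hb).subset (support_add _ _)
  zero_mem' := by simp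
  neg_mem' ha := by simpa using ha

variable {ι}

def vanishingOn (s : Set ι) : AddSubgroup (ι → M) :=
  AddSubgroup.pi s fun _ => ⊥

variable {M}

theorem mem_vanishingOn {s : Set ι} {g : ι → M} : g ∈ vanishingOn M s ↔ ∀ i ∈ s, g i = 0 := by
  simp [vanishingOn, AddSubgroup.mem_pi]

theorem Function.Injective.eqOn_extend {α β γ : Type*} {e : α → β} (he : Injective e)
    {h h' : α → γ} (g : β → γ) {J : Set β} (hJ : Set.EqOn h h' (e ⁻¹' J)) :
    Set.EqOn (extend e h g) (extend e h' g) J := by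
  intro n hn
  by_cases hr : ∃ k, e k = n
  · obtain ⟨k, rfl⟩ := hr
    rw [he.extend_apply, he.extend_apply]
    exact hJ hn
  · rw [extend_apply' _ _ _ hr, extend_apply' _ _ _ hr]

variable {e : ℕ → ℕ} {H₀ : AddSubgroup (ℕ → M)} {D D' : AddSubgroup (ℕ → M)}

theorem extendByZero_add_apply (he : Injective e) {h d : ℕ → M}
    (hd : d ∈ vanishingOn M (Set.range e)) (k : ℕ) : (ExtendByZero.hom M e h + d) (e k) = h k := by
  simp [he.extend_apply, mem_vanishingOn.1 hd _ (Set.mem_range_self k)]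

theorem Controllable.map_extendByZero_sup (he : Injective e) (hH₀ : Controllable H₀)
    (hD : D ≤ finiteSupport ℕ M) : Controllable (H₀.map (ExtendByZero.hom M e) ⊔ D) := by
  rw [controllable_iff] at hH₀ ⊢
  intro J hJ g hg
  obtain ⟨_, ⟨h, hh, rfl⟩, d, hd, rfl⟩ := AddSubgroup.mem_sup.1 hg
  obtain ⟨h', hh', hfin, heq⟩ := hH₀ (e ⁻¹' J) (hJ.preimage he.injOn) h hh
  refine ⟨ExtendByZero.hom M e h' + d, add_mem (AddSubgroup.mem_sup_left ⟨h', hh', rfl⟩)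
    (AddSubgroup.mem_sup_right hd), ?_, fun n hn => congrArg (· + d n) (he.eqOn_extend 0 heq hn)⟩
  exact (((hfin.image e).subset support_extend_zero_subset).union (hD hd)).subset (support_add _ _)

theorem UniformlyControllable.of_map_extendByZero_sup (he : Injective e)
    (hD : D ≤ vanishingOn M (Set.range e))
    (hH : UniformlyControllable (H₀.map (ExtendByZero.hom M e) ⊔ D)) :
    UniformlyControllable H₀ := by
  rw [uniformlyControllable_iff] at hH ⊢
  intro J hJ
  obtain ⟨K, hK, hKH⟩ := hH (e '' J) (hJ.image e)
  refine ⟨e ⁻¹' K, hK.preimage he.injOn, fun g hg => ?_⟩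
  obtain ⟨w, hw, hwK, hwg⟩ := hKH _ (AddSubgroup.mem_sup_left ⟨g, hg, rfl⟩)
  obtain ⟨_, ⟨h, hh, rfl⟩, d, hd, rfl⟩ := AddSubgroup.mem_sup.1 hw
  refine ⟨h, hh, fun k hk => ?_, fun k hk => ?_⟩
  · rw [← extendByZero_add_apply (h := h) he (hD hd)]
    exact hwK _ hk
  · rw [← extendByZero_add_apply (h := h) he (hD hd), hwg (Set.mem_image_of_mem e hk)]
    simp [he.extend_apply]

theorem le_of_le_map_extendByZero_sup (he : Injective e) (hD : D ≤ vanishingOn M (Set.range e))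
    (hD' : D' ≤ vanishingOn M (Set.range e)) (hle : D ≤ H₀.map (ExtendByZero.hom M e) ⊔ D') :
    D ≤ D' := by
  intro d hd
  obtain ⟨_, ⟨h, -, rfl⟩, d', hd', hdd⟩ := AddSubgroup.mem_sup.1 (hle hd)
  have h0 : h = 0 := funext fun k => by
    rw [← extendByZero_add_apply (h := h) he (hD' hd') k, hdd, mem_vanishingOn.1 (hD hd) _ ⟨k, rfl⟩]
    rfl
  rwa [← hdd, h0, map_zero, zero_add]

theorem map_extendByZero_sup_injective {D : ι → AddSubgroup (ℕ → M)} (he : Injective e)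
    (hD : ∀ i, D i ≤ vanishingOn M (Set.range e)) (hinj : Injective D) :
    Injective fun i => H₀.map (ExtendByZero.hom M e) ⊔ D i := by
  intro i j hij
  have hij : H₀.map (ExtendByZero.hom M e) ⊔ D i = H₀.map (ExtendByZero.hom M e) ⊔ D j := hij
  exact hinj ((le_of_le_map_extendByZero_sup he (hD i) (hD j) (hij ▸ le_sup_right)).antisymm
    (le_of_le_map_extendByZero_sup he (hD j) (hD i) (hij.symm ▸ le_sup_right)))

end Twist

section Independence

variable {ι A B : Type*} [AddCommGroup A] [AddCommGroup B] {v : ι → A}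

def ClosureIndependent (v : ι → A) : Prop :=
  ∀ ⦃i : ι⦄ ⦃T : Set ι⦄, i ∉ T → v i ∉ AddSubgroup.closure (v '' T)

theorem LinearIndependent.closureIndependent {R : Type*} [Ring R] [Nontrivial R] [Module R A]
    (hv : LinearIndependent R v) : ClosureIndependent v := fun _ _ hi hmem =>
  hv.notMem_span_image hi <|
    (AddSubgroup.closure_le (Submodule.span R _).toAddSubgroup).2 Submodule.subset_span hmem

theorem closureIndependent_const [Subsingleton ι] {a : A} (ha : a ≠ 0) :
    ClosureIndependent fun _ : ι => a := by
  intro i T hi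
  have hT : T = ∅ := Set.eq_empty_of_forall_notMem fun j hj => hi (Subsingleton.elim j i ▸ hj)
  simpa [hT] using ha

namespace ClosureIndependent

theorem injective_closure_image (hv : ClosureIndependent v) :
    Injective fun S : Set ι => AddSubgroup.closure (v '' S) := by
  suffices h : ∀ {S T : Set ι}, AddSubgroup.closure (v '' S) ≤ AddSubgroup.closure (v '' T) →
      S ⊆ T from fun S T hST => (h hST.le).antisymm (h hST.ge)
  intro S T hST i hi
  by_contra hiT
  exact hv hiT (hST (AddSubgroup.subset_closure (Set.mem_image_of_mem v hi)))

theorem map (hv : ClosureIndependent v) {f : A →+ B} (hf : Injective f) :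
    ClosureIndependent (f ∘ v) := by
  intro i T hi hmem
  rw [Set.image_comp, ← AddMonoidHom.map_closure, comp_apply,
    AddSubgroup.mem_map_iff_mem hf] at hmem
  exact hv hi hmem

theorem sigma_single {C N : Type*} [DecidableEq N] {κ : C → Type*} {w : ∀ c, κ c → A}
    (hw : ∀ c, ClosureIndependent (w c)) {e : C → N} (he : Injective e) :
    ClosureIndependent fun x : Σ c, κ c => (Pi.single (e x.1) (w x.1 x.2) : N → A) := by
  rintro ⟨c, i⟩ T hi hmem
  have key := (AddSubgroup.closure_le ((AddSubgroup.closure (w c '' {j | ⟨c, j⟩ ∈ T})).comap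
    (Pi.evalAddMonoidHom (fun _ : N => A) (e c)))).2 ?_ hmem
  · exact hw c (T := {j | ⟨c, j⟩ ∈ T}) hi (by simpa using key)
  rintro _ ⟨⟨c', j⟩, hj, rfl⟩
  by_cases hc : c' = c
  · subst hc
    simpa using AddSubgroup.subset_closure (Set.mem_image_of_mem (w c') hj)
  · simp [he.ne hc]

end ClosureIndependent

end Independence

section Cardinality

open Cardinal AddSubgroup

variable {A B : Type u} [AddCommGroup A] [AddCommGroup B]

theorem AddSubgroup.mk_closure_le (s : Set A) : #(closure s) ≤ max #s ℵ₀ := by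
  rw [FreeAddGroup.closure_eq_range]
  refine (mk_le_of_surjective (FreeAddGroup.lift ((↑) : s → A)).rangeRestrict_surjective).trans ?_
  cases isEmpty_or_nonempty s
  · exact mk_le_aleph0.trans (le_max_right _ _)
  · rw [mk_freeAddGroup]

theorem AddMonoidHom.mk_eq_mk_range_mul_mk_ker (f : A →+ B) : #A = #f.range * #f.ker := by
  rw [mk_congr (addGroupEquivQuotientProdAddSubgroup (s := f.ker)), mk_prod, lift_id, lift_id,
    mk_congr (QuotientAddGroup.quotientKerEquivRange f).toEquiv]

theorem AddMonoidHom.mk_comap_le (f : A →+ B) (K : AddSubgroup B) :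
    #(K.comap f) ≤ #K * #f.ker := by
  let g := f.comp (K.comap f).subtype
  rw [g.mk_eq_mk_range_mul_mk_ker]
  refine mul_le_mul' (mk_le_of_injective (inclusion_injective (K := K) ?_)) ?_
  · rintro _ ⟨y, rfl⟩
    exact y.2
  · exact mk_le_of_injective (f := fun y : g.ker => (⟨y.1.1, y.2⟩ : f.ker))
      fun y z h => Subtype.ext (Subtype.ext (congrArg (fun w : f.ker => (w : A)) h))

theorem ker_zsmulAddGroupHom (a : ℤ) : (zsmulAddGroupHom a : A →+ A).ker = torsionBy A a := by
  ext x
  simp [Submodule.mem_torsionBy_iff]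

theorem AddSubgroup.torsionBy_mul (a b : ℤ) :
    torsionBy A (a * b) = (torsionBy A b).comap (zsmulAddGroupHom a) := by
  ext x
  simp [Submodule.mem_torsionBy_iff, mul_comm a, mul_smul]

theorem AddSubgroup.mk_torsionBy_le {n : ℕ} (hn : n ≠ 0) :
    #(torsionBy A n) ≤ max ℵ₀ (⨆ p : Nat.Primes, #(torsionBy A p)) := by
  induction n using Nat.recOnMul with
  | zero => exact absurd rfl hn
  | one =>
    have h1 : ∀ x ∈ torsionBy A ((1 : ℕ) : ℤ), x = 0 := fun x hx => by
      simpa [Submodule.mem_torsionBy_iff] using hx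
    refine (le_one_iff_subsingleton.2 ⟨fun x y => Subtype.ext ?_⟩).trans
      (one_le_aleph0.trans (le_max_left _ _))
    rw [h1 _ x.2, h1 _ y.2]
  | prime p hp =>
    exact le_max_of_le_right
      (le_ciSup (f := fun q : Nat.Primes => #(torsionBy A q)) bddAbove_of_small ⟨p, hp⟩)
  | mul a b iha ihb =>
    obtain ⟨ha, hb⟩ := mul_ne_zero_iff.1 hn
    rw [Nat.cast_mul, torsionBy_mul]
    calc _ ≤ #(torsionBy A b) * #(torsionBy A a) := by
          rw [← ker_zsmulAddGroupHom]
          exact AddMonoidHom.mk_comap_le _ _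
      _ ≤ _ := mul_le_mul' (ihb hb) (iha ha)
      _ = _ := mul_eq_self (le_max_left _ _)

theorem mk_le_of_forall_nsmul_mem_closure {s : Set A}
    (h : ∀ y : A, ∃ n : ℕ, n ≠ 0 ∧ n • y ∈ closure s) :
    #A ≤ max (max #s ℵ₀) (⨆ p : Nat.Primes, #(torsionBy A p)) := by
  set T := max (max #s ℵ₀) (⨆ p : Nat.Primes, #(torsionBy A p))
  have hT : ℵ₀ ≤ T := le_max_of_le_left (le_max_right _ _)
  choose n hn0 hn using h
  have hfiber : ∀ k : ℕ, lift.{0} #(n ⁻¹' {k}) ≤ T := by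
    intro k
    rw [lift_uzero]
    rcases eq_or_ne k 0 with rfl | hk
    · have : IsEmpty (n ⁻¹' {0}) := ⟨fun y => hn0 y y.2⟩
      rw [mk_eq_zero]
      exact zero_le
    have hsub : n ⁻¹' {k} ⊆ (closure s).comap (zsmulAddGroupHom (k : ℤ)) :=
      fun y (hy : n y = k) => by simpa [← hy] using hn y
    calc #(n ⁻¹' {k}) ≤ #((closure s).comap (zsmulAddGroupHom (k : ℤ))) :=
          mk_le_mk_of_subset hsub
      _ ≤ #(closure s) * #(torsionBy A k) := by
          rw [← ker_zsmulAddGroupHom]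
          exact AddMonoidHom.mk_comap_le _ _
      _ ≤ T * T := mul_le_mul' ((mk_closure_le s).trans (le_max_left _ _))
          ((mk_torsionBy_le hk).trans (max_le hT (le_max_right _ _)))
      _ = T := mul_eq_self hT
  calc #A ≤ ℵ₀ * T := by simpa using lift_mk_le_lift_mk_mul_of_lift_mk_preimage_le n hfiber
    _ = T := aleph0_mul_eq hT

end Cardinality

section Families

open Cardinal AddSubgroup

variable (A : Type u) [AddCommGroup A]

theorem exists_closureIndependent_nsmul_mem_closure :
    ∃ (ι : Type u) (v : ι → A), ClosureIndependent v ∧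
      ∀ y : A, ∃ n : ℕ, n ≠ 0 ∧ n • y ∈ closure (Set.range v) := by
  obtain ⟨s, hs, hmax⟩ := exists_maximal_linearIndepOn ℤ (id : A → A)
  refine ⟨s, Subtype.val, LinearIndependent.closureIndependent hs, fun y => ?_⟩
  rw [Subtype.range_coe]
  by_cases hy : y ∈ s
  · exact ⟨1, one_ne_zero, by simpa using subset_closure hy⟩
  obtain ⟨a, ha, hay⟩ := hmax y hy
  rw [Set.image_id, ← Submodule.mem_toAddSubgroup, Submodule.span_int_eq_addSubgroupClosure] at hay
  obtain ⟨n, rfl | rfl⟩ := Int.eq_nat_or_neg a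
  · exact ⟨n, by exact_mod_cast ha, by simpa using hay⟩
  · exact ⟨n, by simpa using ha, by simpa using neg_mem hay⟩

theorem exists_closureIndependent_torsionBy_subset (p : ℕ) [Fact p.Prime] :
    ∃ (ι : Type u) (v : ι → A), ClosureIndependent v ∧
      (torsionBy A p : Set A) ⊆ closure (Set.range v) := by
  let := torsionBy.zmodModule (A := A) (n := p)
  let b := Module.Basis.ofVectorSpace (ZMod p) (torsionBy A p)
  refine ⟨_, (torsionBy A p).subtype ∘ b,
    b.linearIndependent.closureIndependent.map (torsionBy A p).subtype_injective, fun y hy => ?_⟩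
  have hmem : (⟨y, hy⟩ : torsionBy A p) ∈ closure (Set.range b) :=
    (Submodule.span_le (p := toZModSubmodule p (closure (Set.range b)))).2 subset_closure
      (b.span_eq ▸ Submodule.mem_top)
  rw [Set.range_comp, ← AddMonoidHom.map_closure]
  exact ⟨_, hmem, rfl⟩

variable {A}

theorem exists_closureIndependent_sigma {C : Type} [Countable C] {κ : C → Type u}
    {w : ∀ c, κ c → A} (hw : ∀ c, ClosureIndependent (w c)) :
    ∃ x : (Σ c, κ c) → ℕ → A, ClosureIndependent x ∧
      ∀ i, x i ∈ finiteSupport ℕ A ⊓ vanishingOn A (Set.range (2 * ·)) := by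
  obtain ⟨e, he⟩ := Countable.exists_injective_nat C
  have hodd : Injective fun c => 2 * e c + 1 := fun a b h => he (by simpa using h)
  refine ⟨fun i => Pi.single (2 * e i.1 + 1) (w i.1 i.2),
    ClosureIndependent.sigma_single (e := fun c => 2 * e c + 1) hw hodd, fun i => ⟨?_, ?_⟩⟩
  · exact (Set.finite_singleton _).subset Pi.support_single_subset
  · refine mem_vanishingOn.2 ?_
    rintro _ ⟨k, rfl⟩
    exact Pi.single_eq_of_ne (by dsimp only; omega) _

theorem exists_closureIndependent_mk_le [Infinite A] :
    ∃ (ι : Type u) (x : ι → ℕ → A), ClosureIndependent x ∧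
      (∀ i, x i ∈ finiteSupport ℕ A ⊓ vanishingOn A (Set.range (2 * ·))) ∧ #A ≤ #ι := by
  rcases le_or_gt #A ℵ₀ with hA | hA
  · obtain ⟨a, ha⟩ := exists_ne (0 : A)
    obtain ⟨x, hx, hxE⟩ := exists_closureIndependent_sigma (C := ℕ) (κ := fun _ => PUnit)
      fun _ => closureIndependent_const ha
    exact ⟨_, x, hx, hxE, hA.trans (by simp)⟩
  obtain ⟨ι₀, v₀, hv₀, hA₀⟩ := exists_closureIndependent_nsmul_mem_closure A
  choose ι v hv hAp using fun p : Nat.Primes =>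
    have := Fact.mk p.2
    exists_closureIndependent_torsionBy_subset A p
  let κ : Option Nat.Primes → Type u := fun o => o.elim ι₀ ι
  let w : ∀ o, κ o → A := fun o => match o with
    | none => v₀
    | some p => v p
  obtain ⟨x, hx, hxE⟩ :=
    exists_closureIndependent_sigma (w := w) (by rintro (_ | p); exacts [hv₀, hv p])
  refine ⟨_, x, hx, hxE, ?_⟩
  have hι : ∀ o, #(κ o) ≤ #(Σ o, κ o) := fun o => mk_le_of_injective sigma_mk_injective
  have hle : #A ≤ max #(Σ o, κ o) ℵ₀ := by
    refine (mk_le_of_forall_nsmul_mem_closure hA₀).trans (max_le ?_ (ciSup_le' fun p => ?_))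
    · exact max_le_max (mk_range_le.trans (hι none)) le_rfl
    · exact (mk_le_mk_of_subset (hAp p)).trans
        ((mk_closure_le _).trans (max_le_max (mk_range_le.trans (hι (some p))) le_rfl))
  exact (le_max_iff.1 hle).resolve_right hA.not_ge

end Families

open Cardinal in
theorem mk_set_le_mk_controllable_not_uniformlyControllable {M ι : Type u} [AddCommGroup M]
    {H₀ : AddSubgroup (ℕ → M)} (hC : Controllable H₀) (hU : ¬UniformlyControllable H₀)
    {e : ℕ → ℕ} (he : Injective e) {x : ι → ℕ → M} (hx : ClosureIndependent x)
    (hxE : ∀ i, x i ∈ finiteSupport ℕ M ⊓ vanishingOn M (Set.range e)) :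
    #(Set ι) ≤ #{H : AddSubgroup (ℕ → M) | Controllable H ∧ ¬UniformlyControllable H} := by
  have hD : ∀ S, AddSubgroup.closure (x '' S) ≤ finiteSupport ℕ M ⊓ vanishingOn M (Set.range e) :=
    fun S => (AddSubgroup.closure_le _).2 (Set.image_subset_iff.2 fun i _ => hxE i)
  refine mk_le_of_injective (f := fun S =>
    ⟨H₀.map (ExtendByZero.hom M e) ⊔ AddSubgroup.closure (x '' S),
      hC.map_extendByZero_sup he ((hD S).trans inf_le_left),
      fun h => hU (h.of_map_extendByZero_sup he ((hD S).trans inf_le_right))⟩) fun S T hST => ?_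
  exact map_extendByZero_sup_injective he (fun S => (hD S).trans inf_le_right)
    hx.injective_closure_image (congrArg Subtype.val hST)

theorem many_controllable_not_uniformlyControllable
    {M : Type*} [AddCommGroup M]
    (ℋ : Set (AddSubgroup (ℕ → M)))
    (hℋ : ℋ = {H | Controllable H ∧ ¬ UniformlyControllable H})
    (hne : ℋ.Nonempty) :
    2 ^ Cardinal.mk M ≤ Cardinal.mk ℋ ∧
      Cardinal.continuum ≤ 2 ^ Cardinal.mk M := by
  subst hℋ
  obtain ⟨H₀, hC, hU⟩ := hne
  have : Infinite M := not_finite_iff_infinite.1 fun _ => hU hC.uniformlyControllable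
  obtain ⟨ι, x, hx, hxE, hM⟩ := exists_closureIndependent_mk_le (A := M)
  refine ⟨?_, Cardinal.two_power_aleph0 ▸
    Cardinal.power_le_power_left two_ne_zero (Cardinal.aleph0_le_mk M)⟩
  calc 2 ^ Cardinal.mk M ≤ 2 ^ Cardinal.mk ι := Cardinal.power_le_power_left two_ne_zero hM
    _ = Cardinal.mk (Set ι) := Cardinal.mk_set.symm
    _ ≤ _ := mk_set_le_mk_controllable_not_uniformlyControllable hC hU
      (mul_right_injective₀ two_ne_zero) hx hxE
end

section
/- Let M be a countably infinite abelian group, G = M^ℕ, and let ℋ_c be the family of all countable subgroups of G that are controllable in G but not uniformly controllable in G. Then either ℋ_c is empty or ℋ_c has cardinality exactly 𝔠, the cardinality of the continuum. -/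
section Aux

variable {M : Type*} [AddCommGroup M]

open Classical in
/-- Pushforward of a sequence along an injection `φ : ℕ → ℕ` of coordinates. -/
noncomputable def pushCoord (φ : ℕ → ℕ) (g : ℕ → M) : ℕ → M :=
  fun n => if h : ∃ m, φ m = n then g h.choose else 0

lemma pushCoord_apply {φ : ℕ → ℕ} (hφ : Function.Injective φ)
    (g : ℕ → M) (m : ℕ) : pushCoord φ g (φ m) = g m := by
  have h : ∃ m', φ m' = φ m := ⟨m, rfl⟩
  simp only [pushCoord, dif_pos h]
  exact congrArg g (hφ h.choose_spec)

lemma pushCoord_apply_not {φ : ℕ → ℕ} {n : ℕ}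
    (h : ¬ ∃ m, φ m = n) (g : ℕ → M) : pushCoord φ g n = 0 := dif_neg h

/-- `pushCoord` as an additive homomorphism. -/
noncomputable def pushHom (φ : ℕ → ℕ) : (ℕ → M) →+ (ℕ → M) where
  toFun := pushCoord φ
  map_zero' := funext fun n => by
    by_cases h : ∃ m, φ m = n <;> simp [pushCoord, h]
  map_add' g g' := funext fun n => by
    by_cases h : ∃ m, φ m = n <;> simp [pushCoord, h]

lemma pushHom_apply (φ : ℕ → ℕ) (g : ℕ → M) : pushHom φ g = pushCoord φ g := rfl

lemma pushCoord_support {φ : ℕ → ℕ} (hφ : Function.Injective φ) (g : ℕ → M) :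
    {n | pushCoord φ g n ≠ 0} = φ '' {m | g m ≠ 0} := by
  ext n
  constructor
  · intro hn
    by_cases h : ∃ m, φ m = n
    · obtain ⟨m, rfl⟩ := h
      rw [Set.mem_setOf_eq, pushCoord_apply hφ] at hn
      exact ⟨m, hn, rfl⟩
    · exact absurd (pushCoord_apply_not h g) hn
  · rintro ⟨m, hm, rfl⟩
    rw [Set.mem_setOf_eq, pushCoord_apply hφ]
    exact hm

/-- The set of coordinates where some element of `H` is nonzero. -/
def suppSet (H : AddSubgroup (ℕ → M)) : Set ℕ := {n | ∃ h ∈ H, h n ≠ 0}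

lemma uniformlyControllable_of_suppSet_finite {H : AddSubgroup (ℕ → M)}
    (h : (suppSet H).Finite) : UniformlyControllable H := by
  intro J _
  refine ⟨suppSet H, h, Set.Subset.antisymm ?_ (Set.image_mono Set.inter_subset_left)⟩
  rintro _ ⟨g, hg, rfl⟩
  refine ⟨g, ⟨hg, fun n hn => ?_⟩, rfl⟩
  by_contra h0
  exact hn ⟨g, hg, h0⟩

lemma suppSet_map {φ : ℕ → ℕ} (hφ : Function.Injective φ) (H : AddSubgroup (ℕ → M)) :
    suppSet (H.map (pushHom φ)) = φ '' suppSet H := by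
  ext n
  constructor
  · rintro ⟨x, hx, hxn⟩
    rcases AddSubgroup.mem_map.mp hx with ⟨h, hh, rfl⟩
    rw [pushHom_apply] at hxn
    by_cases h0 : ∃ m, φ m = n
    · obtain ⟨m, rfl⟩ := h0
      rw [pushCoord_apply hφ] at hxn
      exact ⟨m, ⟨h, hh, hxn⟩, rfl⟩
    · exact absurd (pushCoord_apply_not h0 h) hxn
  · rintro ⟨m, ⟨h, hh, hm⟩, rfl⟩
    refine ⟨pushHom φ h, AddSubgroup.mem_map.mpr ⟨h, hh, rfl⟩, ?_⟩
    rw [pushHom_apply, pushCoord_apply hφ]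
    exact hm

lemma controllable_map {φ : ℕ → ℕ} (hφ : Function.Injective φ)
    {H : AddSubgroup (ℕ → M)} (hH : Controllable H) :
    Controllable (H.map (pushHom φ)) := by
  intro J hJ
  refine Set.Subset.antisymm ?_ (Set.image_mono Set.inter_subset_left)
  rintro _ ⟨x, hx, rfl⟩
  rcases AddSubgroup.mem_map.mp hx with ⟨h, hh, rfl⟩
  have hJ' : (φ ⁻¹' J).Finite := hJ.preimage hφ.injOn
  have hmem : proj (φ ⁻¹' J) h ∈ proj (φ ⁻¹' J) '' (H : Set (ℕ → M)) := ⟨h, hh, rfl⟩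
  rw [hH _ hJ'] at hmem
  rcases hmem with ⟨h', ⟨hh', hfin⟩, heq⟩
  refine ⟨pushHom φ h', ⟨AddSubgroup.mem_map.mpr ⟨h', hh', rfl⟩, ?_⟩, ?_⟩
  · show {n | pushCoord φ h' n ≠ 0}.Finite
    rw [pushCoord_support hφ]
    exact hfin.image φ
  · funext j
    obtain ⟨j, hjJ⟩ := j
    show pushCoord φ h' j = pushCoord φ h j
    by_cases h0 : ∃ m, φ m = j
    · obtain ⟨m, rfl⟩ := h0
      rw [pushCoord_apply hφ, pushCoord_apply hφ]
      exact congrFun heq ⟨m, hjJ⟩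
    · rw [pushCoord_apply_not h0, pushCoord_apply_not h0]

lemma uniformlyControllable_of_map {φ : ℕ → ℕ} (hφ : Function.Injective φ)
    {H : AddSubgroup (ℕ → M)} (h : UniformlyControllable (H.map (pushHom φ))) :
    UniformlyControllable H := by
  intro J hJ
  obtain ⟨K, hK, heq⟩ := h (φ '' J) (hJ.image φ)
  refine ⟨φ ⁻¹' K, hK.preimage hφ.injOn,
    Set.Subset.antisymm ?_ (Set.image_mono Set.inter_subset_left)⟩
  rintro _ ⟨g, hg, rfl⟩
  have hmem : proj (φ '' J) (pushHom φ g) ∈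
      proj (φ '' J) '' ((H.map (pushHom φ) : AddSubgroup (ℕ → M)) : Set (ℕ → M)) :=
    ⟨pushHom φ g, AddSubgroup.mem_map.mpr ⟨g, hg, rfl⟩, rfl⟩
  rw [heq] at hmem
  rcases hmem with ⟨x, ⟨hx, hxK⟩, hxeq⟩
  rcases AddSubgroup.mem_map.mp hx with ⟨h', hh', rfl⟩
  refine ⟨h', ⟨hh', fun n hn => ?_⟩, ?_⟩
  · have h1 : pushCoord φ h' (φ n) = 0 := hxK (φ n) hn
    rwa [pushCoord_apply hφ] at h1
  · funext j
    obtain ⟨j, hj⟩ := j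
    have h2 := congrFun hxeq ⟨φ j, ⟨j, hj, rfl⟩⟩
    show h' j = g j
    have h3 : pushCoord φ h' (φ j) = pushCoord φ g (φ j) := h2
    rwa [pushCoord_apply hφ, pushCoord_apply hφ] at h3

/-- The injection of coordinates attached to a boolean sequence. -/
def boolShift (x : ℕ → Bool) : ℕ → ℕ := fun n => 2 * n + (if x n then 1 else 0)

lemma boolShift_injective (x : ℕ → Bool) : Function.Injective (boolShift x) := by
  intro a b hab
  simp only [boolShift] at hab
  split_ifs at hab <;> omega

end Aux

theorem countable_controllable_not_uniformlyControllable_empty_or_continuum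
    {M : Type*} [AddCommGroup M] [Countable M] [Infinite M]
    (ℋc : Set (AddSubgroup (ℕ → M)))
    (hℋc : ℋc = {H : AddSubgroup (ℕ → M) | (H : Set (ℕ → M)).Countable ∧
      Controllable H ∧ ¬ UniformlyControllable H}) :
    ℋc = ∅ ∨ Cardinal.mk ℋc = Cardinal.continuum := by
  by_cases hemp : ℋc = ∅
  · exact Or.inl hemp
  right
  obtain ⟨H0, hH0⟩ := Set.nonempty_iff_ne_empty.mpr hemp
  have hH0' : (H0 : Set (ℕ → M)).Countable ∧ Controllable H0 ∧
      ¬ UniformlyControllable H0 := by rw [hℋc] at hH0; exact hH0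
  obtain ⟨hcnt, hctrl, hnuc⟩ := hH0'
  -- the support of `H0` is infinite
  have hS : (suppSet H0).Infinite := by
    intro hfin
    exact hnuc (uniformlyControllable_of_suppSet_finite hfin)
  refine le_antisymm ?_ ?_
  · -- upper bound: at most continuum many countable subgroups
    obtain ⟨eM⟩ : Nonempty (M ↪ ℕ) := nonempty_embedding_nat M
    -- inject ℋc into ℕ → (ℕ → M)
    have hchoice : ∀ H : ℋc, ∃ f : ℕ → (ℕ → M),
        ((H : AddSubgroup (ℕ → M)) : Set (ℕ → M)) = Set.range f := by
      rintro ⟨H, hH⟩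
      have hHc : (H : Set (ℕ → M)).Countable := by
        rw [hℋc] at hH; exact hH.1
      exact hHc.exists_eq_range ⟨0, H.zero_mem⟩
    choose F hF using hchoice
    have hFinj : Function.Injective F := by
      intro A B hAB
      apply Subtype.ext
      apply SetLike.ext'
      rw [hF A, hF B, hAB]
    have h1 : Cardinal.mk ℋc ≤ Cardinal.mk (ℕ → (ℕ → M)) :=
      Cardinal.mk_le_of_injective hFinj
    have hMle : Cardinal.mk (ℕ → M) ≤ Cardinal.continuum := by
      rw [Cardinal.mk_arrow, Cardinal.lift_uzero, Cardinal.mk_nat, Cardinal.lift_aleph0]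
      calc Cardinal.mk M ^ Cardinal.aleph0
          ≤ Cardinal.aleph0 ^ Cardinal.aleph0 :=
            Cardinal.power_le_power_right Cardinal.mk_le_aleph0
        _ = Cardinal.continuum := Cardinal.aleph0_power_aleph0
    have h2 : Cardinal.mk (ℕ → (ℕ → M)) ≤ Cardinal.continuum := by
      rw [Cardinal.mk_arrow, Cardinal.lift_uzero, Cardinal.mk_nat, Cardinal.lift_aleph0]
      calc Cardinal.mk (ℕ → M) ^ Cardinal.aleph0
          ≤ Cardinal.continuum ^ Cardinal.aleph0 :=
            Cardinal.power_le_power_right hMle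
        _ = Cardinal.continuum := Cardinal.continuum_power_aleph0
    exact h1.trans h2
  · -- lower bound: continuum many subgroups from `H0`
    set e := hS.natEmbedding with he
    -- spread a boolean sequence along the support
    classical
    let y : (ℕ → Bool) → (ℕ → Bool) := fun x n =>
      if h : ∃ m, ((e m : ℕ) = n) then x h.choose else false
    have hy : ∀ x m, y x ((e m : ℕ)) = x m := by
      intro x m
      have h : ∃ m', ((e m' : ℕ) = (e m : ℕ)) := ⟨m, rfl⟩
      simp only [y, dif_pos h]
      congr 1
      exact e.injective (Subtype.ext h.choose_spec)
    let Gx : (ℕ → Bool) → AddSubgroup (ℕ → M) :=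
      fun x => H0.map (pushHom (boolShift (y x)))
    have hmem : ∀ x, Gx x ∈ ℋc := by
      intro x
      rw [hℋc]
      refine ⟨?_, controllable_map (boolShift_injective _) hctrl, fun huc =>
        hnuc (uniformlyControllable_of_map (boolShift_injective _) huc)⟩
      show ((H0.map (pushHom (boolShift (y x))) : AddSubgroup (ℕ → M)) :
        Set (ℕ → M)).Countable
      rw [AddSubgroup.coe_map]
      exact hcnt.image _
    have hGinj : Function.Injective Gx := by
      intro x x' hxx'
      funext m
      have hsupp : boolShift (y x) '' suppSet H0 = boolShift (y x') '' suppSet H0 := by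
        rw [← suppSet_map (boolShift_injective (y x)) H0,
          ← suppSet_map (boolShift_injective (y x')) H0]
        exact congrArg suppSet hxx'
      have hsm : (e m : ℕ) ∈ suppSet H0 := (e m).2
      have h1 : boolShift (y x) (e m : ℕ) ∈ boolShift (y x') '' suppSet H0 := by
        rw [← hsupp]; exact ⟨(e m : ℕ), hsm, rfl⟩
      obtain ⟨t, _, ht⟩ := h1
      simp only [boolShift] at ht
      have hts : t = (e m : ℕ) := by split_ifs at ht <;> omega
      subst hts
      have hb : (if y x' (e m : ℕ) then 1 else 0 : ℕ) =
          (if y x (e m : ℕ) then 1 else 0) := by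
        split_ifs at ht ⊢ <;> omega
      have hyy : y x' (e m : ℕ) = y x (e m : ℕ) := by
        by_cases hb1 : y x' (e m : ℕ) <;> by_cases hb2 : y x (e m : ℕ) <;>
          simp [hb1, hb2] at hb ⊢
      rw [← hy x m, ← hy x' m, hyy]
    have hFC : Function.Injective (fun x : ℕ → Bool => (⟨Gx x, hmem x⟩ : ℋc)) := by
      intro x x' h
      exact hGinj (congrArg Subtype.val h)
    have h1 := Cardinal.lift_mk_le_lift_mk_of_injective hFC
    have h2 : Cardinal.mk (ℕ → Bool) = Cardinal.continuum := by
      rw [Cardinal.mk_arrow, Cardinal.lift_uzero, Cardinal.mk_nat, Cardinal.lift_aleph0,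
        Cardinal.mk_bool, ← Cardinal.two_power_aleph0]
    rwa [h2, Cardinal.lift_continuum, Cardinal.lift_uzero] at h1
end

section
/- Let 𝕋 = ℝ/ℤ be the circle group and let ℋ be the family of all subgroups of 𝕋^ℕ that are controllable in 𝕋^ℕ but not uniformly controllable in 𝕋^ℕ. Then ℋ has cardinality 2^𝔠, where 𝔠 is the cardinality of the continuum. -/
/-!
Let `s ∈ M` have infinite order and let no `w m ∈ M` lie in the span of `w 0, …, w (m - 1)`.
The subgroup of `M^ℕ` generated by the vectors with `w n` at `0` and `s` at `n + 2`, together with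
`A ≤ M` placed at the free coordinate `1`, consists of finitely supported vectors, so it is
controllable. It is not uniformly controllable: in an element supported in `{0, …, m + 1}` the
generators with `n ≥ m` have coefficient zero because `s` has infinite order, so its `0`-th
coordinate lies in the span of `w 0, …, w (m - 1)` and is never `w m`.

On `𝕋` take `s = √2` and `w n = 1 / 2 ^ (n + 1)`. Varying `A` gives `2 ^ 𝔠` such subgroups, since
the `ℚ`-subspaces of `ℝ ⧸ ℚ`, a space of dimension `𝔠`, inject into the subgroups of `𝕋` by taking
preimages in `ℝ` and then images in `𝕋`.
-/

open Cardinal Set Submodule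

local notation "𝕋" => AddCircle (1 : ℝ)

theorem two_pow_rank_le_mk_submodule (K V : Type*) [DivisionRing K] [AddCommGroup V]
    [Module K V] : 2 ^ Module.rank K V ≤ #(Submodule K V) := by
  let b := Module.Basis.ofVectorSpace K V
  rw [← b.mk_eq_rank'', ← mk_set]
  refine mk_le_of_injective (f := fun s => span K (b '' s))
    fun s t (hst : span K (b '' s) = span K (b '' t)) => ?_
  ext i
  rw [← b.self_mem_span_image, hst, b.self_mem_span_image]

theorem rank_rat_real_quotient_span_one : Module.rank ℚ (ℝ ⧸ ℚ ∙ (1 : ℝ)) = 𝔠 := by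
  refine eq_of_add_eq_of_aleph0_le (a := Module.rank ℚ (ℚ ∙ (1 : ℝ))) ?_ ?_ aleph0_le_continuum
  · rw [add_comm, rank_quotient_add_rank, Real.rank_rat_real]
  · have h := rank_span_of_finset (R := ℚ) {(1 : ℝ)}
    rw [Finset.coe_singleton] at h
    exact h.trans_le aleph0_le_continuum

theorem mk_submodule_quotient_le_mk_addSubgroup_addCircle :
    #(Submodule ℚ (ℝ ⧸ ℚ ∙ (1 : ℝ))) ≤ #(AddSubgroup 𝕋) := by
  rw [mk_congr (comapMkQRelIso _).toEquiv,
    mk_congr (QuotientAddGroup.comapMk'OrderIso (AddSubgroup.zmultiples (1 : ℝ))).toEquiv]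
  refine mk_le_of_injective (f := fun V => ⟨V.1.toAddSubgroup, ?_⟩) fun V W h => ?_
  · exact AddSubgroup.zmultiples_le_of_mem (V.2 (mem_span_singleton_self 1))
  · exact Subtype.ext (toAddSubgroup_injective (congrArg Subtype.val h))

theorem two_pow_continuum_le_mk_addSubgroup_addCircle : 2 ^ 𝔠 ≤ #(AddSubgroup 𝕋) := by
  rw [← rank_rat_real_quotient_span_one]
  exact (two_pow_rank_le_mk_submodule _ _).trans mk_submodule_quotient_le_mk_addSubgroup_addCircle

theorem mk_pi_nat_addCircle_le : #(ℕ → 𝕋) ≤ 𝔠 := by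
  rw [← power_def, mk_nat, ← continuum_power_aleph0, ← mk_real]
  exact power_le_power_right (mk_le_of_surjective QuotientAddGroup.mk_surjective)

theorem controllable_of_hasFiniteSupport {M : Type*} [AddCommGroup M] {H : AddSubgroup (ℕ → M)}
    (hH : ∀ g ∈ H, g.HasFiniteSupport) : Controllable H :=
  fun J _ => congrArg (proj J '' ·) (inter_eq_left.2 hH).symm

noncomputable section NonUniform

variable {M : Type*} [AddCommGroup M] (s : M) (w : ℕ → M)

def nonUniformHom : (ℕ →₀ ℤ) →+ (ℕ → M) where
  toFun c
    | 0 => Finsupp.linearCombination ℤ w c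
    | 1 => 0
    | n + 2 => c n • s
  map_zero' := by funext n; rcases n with _ | _ | n <;> simp
  map_add' c d := by funext n; rcases n with _ | _ | n <;> simp [add_zsmul]

@[simp] lemma nonUniformHom_apply_zero (c : ℕ →₀ ℤ) :
    nonUniformHom s w c 0 = Finsupp.linearCombination ℤ w c := rfl

@[simp] lemma nonUniformHom_apply_add_two (c : ℕ →₀ ℤ) (n : ℕ) :
    nonUniformHom s w c (n + 2) = c n • s := rfl

lemma hasFiniteSupport_nonUniformHom (c : ℕ →₀ ℤ) :
    (nonUniformHom s w c).HasFiniteSupport := by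
  refine ((c.hasFiniteSupport.image (· + 2)).insert 0).subset fun n hn => ?_
  rcases n with _ | _ | n
  · exact mem_insert 0 _
  · exact absurd rfl hn
  · refine mem_insert_of_mem 0 ⟨n, fun hc => hn ?_, rfl⟩
    simp [hc]

def nonUniformSubgroup (A : AddSubgroup M) : AddSubgroup (ℕ → M) :=
  (nonUniformHom s w).range ⊔ A.map (AddMonoidHom.single _ 1)

theorem controllable_nonUniformSubgroup (A : AddSubgroup M) :
    Controllable (nonUniformSubgroup s w A) := by
  refine controllable_of_hasFiniteSupport fun g hg => ?_
  obtain ⟨_, ⟨c, rfl⟩, _, ⟨a, -, rfl⟩, rfl⟩ := AddSubgroup.mem_sup.1 hg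
  exact (hasFiniteSupport_nonUniformHom s w c).add
    ((finite_singleton 1).subset Pi.support_single_subset)

theorem map_eval_one_nonUniformSubgroup (A : AddSubgroup M) :
    (nonUniformSubgroup s w A).map (Pi.evalAddMonoidHom _ 1) = A := by
  have hzero : (Pi.evalAddMonoidHom _ 1).comp (nonUniformHom s w) = 0 := rfl
  rw [nonUniformSubgroup, AddSubgroup.map_sup, AddMonoidHom.map_range, hzero,
    AddMonoidHom.range_zero, AddSubgroup.map_map, bot_sup_eq]
  exact A.map_id

theorem nonUniformSubgroup_injective : Function.Injective (nonUniformSubgroup s w) :=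
  Function.LeftInverse.injective (map_eval_one_nonUniformSubgroup s w)

theorem not_uniformlyControllable_nonUniformSubgroup (hs : ¬ IsOfFinAddOrder s)
    (hw : ∀ m, w m ∉ span ℤ (w '' Iio m)) (A : AddSubgroup M) :
    ¬ UniformlyControllable (nonUniformSubgroup s w A) := by
  intro h
  obtain ⟨K, hK, hJK⟩ := h {0} (finite_singleton 0)
  obtain ⟨m, hm⟩ := hK.bddAbove
  obtain ⟨g, ⟨hg, hgK⟩, hg0⟩ : proj {0} (nonUniformHom s w (Finsupp.single m 1)) ∈
      proj {0} '' ((nonUniformSubgroup s w A : Set (ℕ → M)) ∩ {g | ∀ n ∉ K, g n = 0}) :=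
    hJK ▸ mem_image_of_mem _ (AddSubgroup.mem_sup_left ⟨_, rfl⟩)
  obtain ⟨_, ⟨c, rfl⟩, _, ⟨a, -, rfl⟩, rfl⟩ := AddSubgroup.mem_sup.1 hg
  have hc : ↑c.support ⊆ Iio m := fun n hn => by
    by_contra hmn
    rw [mem_Iio, not_lt] at hmn
    have hnK : n + 2 ∉ K := fun hnK => by linarith [hm hnK]
    have hsn : c n • s = (0 : ℤ) • s := by simpa using hgK (n + 2) hnK
    exact Finsupp.mem_support_iff.1 hn ((injective_zsmul_iff_not_isOfFinAddOrder.2 hs).eq_iff.1 hsn)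
  have h0 : Finsupp.linearCombination ℤ w c = w m := by simpa [proj] using congrFun hg0 ⟨0, rfl⟩
  exact hw m (h0 ▸ (Finsupp.mem_span_image_iff_linearCombination ℤ).2 ⟨c, hc, rfl⟩)

end NonUniform

lemma not_isOfFinAddOrder_sqrt_two : ¬ IsOfFinAddOrder ((√2 : ℝ) : 𝕋) :=
  AddCircle.not_isOfFinAddOrder_iff_forall_rat_ne_div.2 fun q hq =>
    irrational_sqrt_two ⟨q, by simpa using hq⟩

noncomputable def dyadic (n : ℕ) : 𝕋 := ((1 / (2 ^ (n + 1) : ℕ) : ℝ) : 𝕋)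

lemma addOrderOf_dyadic (n : ℕ) : addOrderOf (dyadic n) = 2 ^ (n + 1) :=
  AddCircle.addOrderOf_period_div (by positivity)

lemma dyadic_mem_torsionBy_two_pow_iff {n m : ℕ} : dyadic n ∈ torsionBy ℤ 𝕋 (2 ^ m) ↔ n < m := by
  rw [mem_torsionBy_iff, ← addOrderOf_dvd_iff_zsmul_eq_zero, addOrderOf_dyadic]
  exact_mod_cast Nat.pow_dvd_pow_iff_le_right one_lt_two

lemma dyadic_notMem_span_image_Iio (m : ℕ) : dyadic m ∉ span ℤ (dyadic '' Iio m) := fun h =>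
  lt_irrefl m <| dyadic_mem_torsionBy_two_pow_iff.1 <|
    span_le.2 (image_subset_iff.2 fun _ => dyadic_mem_torsionBy_two_pow_iff.2) h

theorem card_controllable_not_uniformlyControllable_circle :
    Cardinal.mk {H : AddSubgroup (ℕ → AddCircle (1 : ℝ)) |
        Controllable H ∧ ¬ UniformlyControllable H} =
      2 ^ Cardinal.continuum := by
  apply le_antisymm
  · calc #{H : AddSubgroup (ℕ → 𝕋) | Controllable H ∧ ¬ UniformlyControllable H}
        ≤ #(Set (ℕ → 𝕋)) := (mk_subtype_le _).trans (mk_le_of_injective SetLike.coe_injective)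
      _ ≤ 2 ^ 𝔠 := by rw [mk_set]; exact power_le_power_left two_ne_zero mk_pi_nat_addCircle_le
  · refine two_pow_continuum_le_mk_addSubgroup_addCircle.trans <| mk_le_of_injective
      (f := fun A => ⟨nonUniformSubgroup ((√2 : ℝ) : 𝕋) dyadic A,
        controllable_nonUniformSubgroup _ _ A,
        not_uniformlyControllable_nonUniformSubgroup _ _ not_isOfFinAddOrder_sqrt_two
          dyadic_notMem_span_image_Iio A⟩)
      fun A B hAB => nonUniformSubgroup_injective _ _ (congrArg Subtype.val hAB)
end

section
/- Let 𝕋 = ℝ/ℤ be the circle group with its usual topology. There exists a subgroup H of G = 𝕋^ℕ (with the product topology) that is closed in G (hence compact), weakly controllable in G, but not controllable in G. -/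
/-- A subgroup `H` of the direct product `G = M^ℕ` of a topological abelian
group is *weakly controllable* in `G` if `H ∩ ⊕_{n ∈ ℕ} M` is dense in `H`
(with respect to the Tychonoff product topology). -/
def WeaklyControllable {M : Type*} [AddCommGroup M] [TopologicalSpace M]
    (H : AddSubgroup (ℕ → M)) : Prop :=
  (H : Set (ℕ → M)) ⊆ closure ((H : Set (ℕ → M)) ∩ {g | {n | g n ≠ 0}.Finite})


/-!
Take `H` to be the image of the continuous homomorphism `x ↦ (2 ^ n • x)ₙ` from the circle to
`𝕋^ℕ`; it is compact, hence closed. The image of `x` has finite support exactly when `x` lies in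
the `2`-primary component of `𝕋` (the dyadic points `j / 2 ^ k`). These are dense in `𝕋`, so `H`
is weakly controllable; they are not all of `𝕋` (e.g. `1 / 3` is missing), and the projection to
the coordinate `0` is `x` itself, so `H` is not controllable.
-/

open Set

section PowNSMulSeq

variable {M : Type*}

@[simps]
def powNSMulSeq [AddCommMonoid M] (m : ℕ) : M →+ (ℕ → M) where
  toFun x n := m ^ n • x
  map_zero' := by ext; simp
  map_add' x y := by ext; simp [smul_add]

theorem finite_support_powNSMulSeq_iff [AddCommMonoid M] {m : ℕ} {x : M} :
    {n | powNSMulSeq m x n ≠ 0}.Finite ↔ x ∈ AddCommMonoid.primaryComponent M m := by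
  simp only [powNSMulSeq_apply, AddCommMonoid.mem_primaryComponent]
  constructor
  · intro hfin
    obtain ⟨N, hN⟩ := hfin.bddAbove
    exact ⟨N + 1, not_not.mp fun h => (hN h).not_gt N.lt_succ_self⟩
  · rintro ⟨k, hk⟩
    refine (finite_Iio k).subset fun n hn => mem_Iio.mpr <| not_le.mp fun hkn => hn ?_
    rw [← pow_mul_pow_sub m hkn, mul_nsmul, hk, nsmul_zero]

theorem continuous_powNSMulSeq [AddCommMonoid M] [TopologicalSpace M] [ContinuousAdd M]
    (m : ℕ) : Continuous (powNSMulSeq (M := M) m) :=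
  continuous_pi fun n => continuous_nsmul (m ^ n)

theorem isCompact_range_powNSMulSeq [AddCommGroup M] [TopologicalSpace M] [ContinuousAdd M]
    [CompactSpace M] (m : ℕ) : IsCompact ((powNSMulSeq (M := M) m).range : Set (ℕ → M)) :=
  isCompact_range (continuous_powNSMulSeq m)

theorem weaklyControllable_range_powNSMulSeq [AddCommGroup M] [TopologicalSpace M]
    [ContinuousAdd M] {m : ℕ} (hdense : Dense (AddCommMonoid.primaryComponent M m : Set M)) :
    WeaklyControllable (powNSMulSeq (M := M) m).range := by
  rintro _ ⟨x, rfl⟩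
  have hsub : powNSMulSeq m '' (AddCommMonoid.primaryComponent M m : Set M) ⊆
      ((powNSMulSeq (M := M) m).range : Set (ℕ → M)) ∩ {g | {n | g n ≠ 0}.Finite} := by
    rintro _ ⟨y, hy, rfl⟩
    exact ⟨⟨y, rfl⟩, finite_support_powNSMulSeq_iff.mpr hy⟩
  exact closure_mono hsub <|
    mem_closure_image (continuous_powNSMulSeq m).continuousAt (hdense x)

theorem not_controllable_range_powNSMulSeq [AddCommGroup M] {m : ℕ} {x : M}
    (hx : x ∉ AddCommMonoid.primaryComponent M m) :
    ¬ Controllable (powNSMulSeq (M := M) m).range := by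
  intro hcontr
  have hx_mem : powNSMulSeq m x ∈ (powNSMulSeq (M := M) m).range := ⟨x, rfl⟩
  obtain ⟨_, ⟨⟨y, rfl⟩, hfin⟩, hyx⟩ :=
    (hcontr {0} (finite_singleton 0)).subset (mem_image_of_mem (proj {0}) hx_mem)
  have hy : y = x := by simpa [proj] using congrFun hyx ⟨0, rfl⟩
  exact hx (hy ▸ finite_support_powNSMulSeq_iff.mp hfin)

end PowNSMulSeq

namespace AddCircle

variable (p : ℝ) [Fact (0 < p)]

theorem dense_primaryComponent {m : ℕ} (hm : 1 < m) :
    Dense (AddCommMonoid.primaryComponent (AddCircle p) m : Set (AddCircle p)) := by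
  let S : AddSubgroup (AddCircle p) :=
    { AddCommMonoid.primaryComponent (AddCircle p) m with
      neg_mem' := fun ⟨k, hk⟩ => ⟨k, by rw [smul_neg, hk, neg_zero]⟩ }
  rw [← QuotientAddGroup.dense_preimage_mk]
  refine (S.comap (QuotientAddGroup.mk' _)).dense_of_not_isolated_zero fun ε hε => ?_
  obtain ⟨k, hk⟩ := pow_unbounded_of_one_lt (p / ε) (Nat.one_lt_cast.mpr hm : (1 : ℝ) < m)
  have hmk : (0 : ℝ) < (m : ℝ) ^ k := by positivity
  refine ⟨p / (m : ℝ) ^ k, ⟨k, ?_⟩, div_pos Fact.out hmk, ?_⟩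
  · change m ^ k • ((p / (m : ℝ) ^ k : ℝ) : AddCircle p) = 0
    rw [← coe_nsmul, nsmul_eq_mul, Nat.cast_pow, mul_div_cancel₀ _ hmk.ne', coe_period]
  · rwa [div_lt_comm₀ hmk hε]

theorem exists_notMem_primaryComponent {m : ℕ} (hm : 0 < m) :
    ∃ x : AddCircle p, x ∉ AddCommMonoid.primaryComponent (AddCircle p) m := by
  refine ⟨((p / (m + 1 : ℕ) : ℝ) : AddCircle p), fun ⟨k, hk⟩ => ?_⟩
  rw [← addOrderOf_dvd_iff_nsmul_eq_zero, addOrderOf_period_div m.succ_pos] at hk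
  have hcop : (m + 1).Coprime (m ^ k) :=
    (Nat.coprime_self_add_left.mpr (Nat.coprime_one_left m)).pow_right k
  have := hcop.eq_one_of_dvd hk
  omega

end AddCircle

theorem exists_closed_weaklyControllable_not_controllable_circle :
    ∃ H : AddSubgroup (ℕ → AddCircle (1 : ℝ)),
      IsClosed (H : Set (ℕ → AddCircle (1 : ℝ))) ∧
      IsCompact (H : Set (ℕ → AddCircle (1 : ℝ))) ∧
      WeaklyControllable H ∧ ¬ Controllable H := by
  have hcompact := isCompact_range_powNSMulSeq (M := AddCircle (1 : ℝ)) 2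
  obtain ⟨x, hx⟩ := AddCircle.exists_notMem_primaryComponent (1 : ℝ) two_pos
  exact ⟨(powNSMulSeq 2).range, hcompact.isClosed, hcompact,
    weaklyControllable_range_powNSMulSeq (AddCircle.dense_primaryComponent 1 one_lt_two),
    not_controllable_range_powNSMulSeq hx⟩
end

section
/- There exists a subgroup H of 𝕋^ℕ (where 𝕋 = ℝ/ℤ has its usual topology and 𝕋^ℕ the product topology) that is controllable in 𝕋^ℕ, countable and torsion, but whose closure in 𝕋^ℕ is not controllable in 𝕋^ℕ. -/
noncomputable section Aux

/-- The orbit map `t ↦ (2^n t)_n` into the infinite torus. -/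
def phi : ℝ →+ (ℕ → AddCircle (1 : ℝ)) where
  toFun t := fun n => ((2 ^ n * t : ℝ) : AddCircle (1 : ℝ))
  map_zero' := by funext n; simp
  map_add' x y := by
    funext n
    show ((2 ^ n * (x + y) : ℝ) : AddCircle (1 : ℝ)) = _
    rw [mul_add]; rfl

/-- Dyadic rationals as an additive subgroup of `ℝ`. -/
def Dy : AddSubgroup ℝ where
  carrier := {x | ∃ a : ℤ, ∃ j : ℕ, x * 2 ^ j = a}
  zero_mem' := ⟨0, 0, by simp⟩
  add_mem' := by
    rintro x y ⟨a, j, ha⟩ ⟨b, k, hb⟩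
    refine ⟨a * 2 ^ k + b * 2 ^ j, j + k, ?_⟩
    push_cast
    rw [pow_add]
    linear_combination 2 ^ k * ha + 2 ^ j * hb
  neg_mem' := by
    rintro x ⟨a, j, ha⟩
    exact ⟨-a, j, by push_cast; linarith⟩

def H : AddSubgroup (ℕ → AddCircle (1 : ℝ)) := Dy.map phi

lemma phi_int_eq_zero (a : ℤ) : phi (a : ℝ) = 0 := by
  funext n
  show ((2 ^ n * (a : ℝ) : ℝ) : AddCircle (1 : ℝ)) = 0
  rw [AddCircle.coe_eq_zero_iff]
  refine ⟨2 ^ n * a, ?_⟩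
  rw [zsmul_eq_mul]; push_cast; ring

lemma H_finsupp : (H : Set (ℕ → AddCircle (1 : ℝ))) ⊆ {g | {n | g n ≠ 0}.Finite} := by
  rintro _ ⟨x, ⟨a, j, ha⟩, rfl⟩
  apply Set.Finite.subset (Set.finite_Iio j)
  intro n hn
  by_contra hnj
  apply hn
  simp only [Set.mem_Iio, not_lt] at hnj
  show ((2 ^ n * x : ℝ) : AddCircle (1 : ℝ)) = 0
  rw [AddCircle.coe_eq_zero_iff]
  refine ⟨a * 2 ^ (n - j), ?_⟩
  rw [zsmul_eq_mul]
  push_cast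
  have h2 : (2 : ℝ) ^ n = 2 ^ (n - j) * 2 ^ j := by
    rw [← pow_add]; congr 1; omega
  rw [h2]
  linear_combination (-(2:ℝ)^(n-j)) * ha

lemma continuous_phi : Continuous (phi : ℝ → ℕ → AddCircle (1 : ℝ)) := by
  apply continuous_pi
  intro n
  exact (AddCircle.continuous_mk' (1:ℝ)).comp (continuous_const.mul continuous_id)

/-- The closed "solenoid" constraint set. -/
def K : Set (ℕ → AddCircle (1 : ℝ)) := {x | ∀ n, x (n + 1) = x n + x n}

lemma K_closed : IsClosed K := by
  have : K = ⋂ n, {x : ℕ → AddCircle (1 : ℝ) | x (n + 1) = x n + x n} := by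
    ext x; simp [K]
  rw [this]
  exact isClosed_iInter fun n =>
    isClosed_eq (continuous_apply _) ((continuous_apply n).add (continuous_apply n))

lemma phi_mem_K (t : ℝ) : phi t ∈ K := by
  intro n
  show ((2 ^ (n+1) * t : ℝ) : AddCircle (1:ℝ)) = _
  have : (2:ℝ) ^ (n+1) * t = 2 ^ n * t + 2 ^ n * t := by ring
  rw [this]; rfl

lemma K_pow {x : ℕ → AddCircle (1 : ℝ)} (hx : x ∈ K) (n : ℕ) :
    x n = (2 ^ n : ℕ) • x 0 := by
  induction n with
  | zero => simp
  | succ n ih =>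
    rw [hx n, ih, ← add_nsmul]
    congr 1
    ring

lemma phi_real_mem_closure (t : ℝ) :
    phi t ∈ closure (H : Set (ℕ → AddCircle (1 : ℝ))) := by
  have key : ∀ j : ℕ, |(⌊2 ^ j * t⌋ : ℝ) / 2 ^ j - t| ≤ 1 / 2 ^ j := by
    intro j
    have h2 : (0:ℝ) < 2 ^ j := by positivity
    have heq : (⌊2 ^ j * t⌋ : ℝ) / 2 ^ j - t = ((⌊2 ^ j * t⌋ : ℝ) - 2 ^ j * t) / 2 ^ j := by
      field_simp
    rw [heq, abs_div, abs_of_pos h2, div_le_div_iff_of_pos_right h2, abs_le]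
    constructor
    · nlinarith [Int.sub_one_lt_floor (2 ^ j * t)]
    · nlinarith [Int.floor_le (2 ^ j * t)]
  have h3 : Filter.Tendsto (fun j : ℕ => (1:ℝ) / 2 ^ j) Filter.atTop (nhds 0) := by
    simp only [one_div, ← inv_pow]
    exact tendsto_pow_atTop_nhds_zero_of_lt_one (by norm_num) (by norm_num)
  have htend : Filter.Tendsto (fun j : ℕ => (⌊2 ^ j * t⌋ : ℝ) / 2 ^ j)
      Filter.atTop (nhds t) := by
    rw [← tendsto_sub_nhds_zero_iff]
    exact squeeze_zero_norm key h3
  have := (continuous_phi.tendsto t).comp htend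
  apply mem_closure_of_tendsto this
  filter_upwards with j
  exact ⟨_, ⟨⌊2 ^ j * t⌋, j, by field_simp⟩, rfl⟩

end Aux

lemma H_countable : (H : Set (ℕ → AddCircle (1 : ℝ))).Countable := by
  have h1 : (Dy : Set ℝ).Countable := by
    apply Set.Countable.mono ?_ (Set.countable_range
      (fun p : ℤ × ℕ => (p.1 : ℝ) / 2 ^ p.2))
    rintro x ⟨a, j, ha⟩
    refine ⟨(a, j), ?_⟩
    have h2 : (0:ℝ) < 2 ^ j := by positivity
    field_simp
    linarith
  have : (H : Set (ℕ → AddCircle (1 : ℝ))) = phi '' (Dy : Set ℝ) := rfl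
  rw [this]
  exact h1.image _

lemma H_sub_K : (H : Set (ℕ → AddCircle (1 : ℝ))) ⊆ K := by
  rintro _ ⟨x, _, rfl⟩
  exact phi_mem_K x


theorem exists_controllable_with_non_controllable_closure_circle :
    ∃ H : AddSubgroup (ℕ → AddCircle (1 : ℝ)),
      Controllable H ∧
      (H : Set (ℕ → AddCircle (1 : ℝ))).Countable ∧
      (∀ h ∈ H, IsOfFinAddOrder h) ∧
      ¬ Controllable H.topologicalClosure := by
  refine ⟨H, ?_, H_countable, ?_, ?_⟩
  · -- Controllable: every element has finite support
    intro J hJ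
    rw [Set.inter_eq_left.mpr H_finsupp]
  · -- torsion
    rintro _ ⟨x, ⟨a, j, ha⟩, rfl⟩
    rw [isOfFinAddOrder_iff_nsmul_eq_zero]
    refine ⟨2 ^ j, by positivity, ?_⟩
    rw [← map_nsmul]
    have : (2 ^ j : ℕ) • x = (a : ℝ) := by
      rw [nsmul_eq_mul]; push_cast; linarith [ha]
    rw [this, phi_int_eq_zero]
  · -- closure not controllable
    intro hC
    have hclK : closure (H : Set (ℕ → AddCircle (1 : ℝ))) ⊆ K :=
      closure_minimal H_sub_K K_closed
    have hJ : ({0} : Set ℕ).Finite := Set.finite_singleton 0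
    have hmem : phi (Real.sqrt 2) ∈ (H.topologicalClosure : Set (ℕ → AddCircle (1:ℝ))) :=
      phi_real_mem_closure (Real.sqrt 2)
    have h1 : proj {0} (phi (Real.sqrt 2)) ∈
        proj {0} '' (H.topologicalClosure : Set (ℕ → AddCircle (1:ℝ))) :=
      ⟨_, hmem, rfl⟩
    rw [hC {0} hJ] at h1
    obtain ⟨x, ⟨hxcl, hxfin⟩, hproj⟩ := h1
    have hxK : x ∈ K := hclK hxcl
    have hx0 : x 0 = ((Real.sqrt 2 : ℝ) : AddCircle (1:ℝ)) := by
      have := congrFun hproj ⟨0, rfl⟩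
      simpa [proj, phi] using this
    obtain ⟨M, hM⟩ : ∃ M, x M = 0 := by
      obtain ⟨M, hM⟩ := (Set.Finite.infinite_compl hxfin).nonempty
      exact ⟨M, not_not.mp hM⟩
    have hxM : x M = ((2 ^ M * Real.sqrt 2 : ℝ) : AddCircle (1:ℝ)) := by
      rw [K_pow hxK M, hx0]
      have := K_pow (phi_mem_K (Real.sqrt 2)) M
      simp only [phi, AddMonoidHom.coe_mk, ZeroHom.coe_mk] at this
      rw [pow_zero, one_mul] at this
      exact this.symm
    rw [hM] at hxM
    rw [eq_comm, AddCircle.coe_eq_zero_iff] at hxM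
    obtain ⟨m, hm⟩ := hxM
    rw [zsmul_eq_mul, mul_one] at hm
    apply irrational_sqrt_two
    refine ⟨(m : ℚ) / 2 ^ M, ?_⟩
    have h2 : (0:ℝ) < 2 ^ M := by positivity
    push_cast
    field_simp
    linarith [hm]
end

section
/- Let p be a prime number and let ℋ_p be the family of all subgroups of G = (ℤ/pℤ)^ℕ that are uniformly controllable in G but not strongly controllable in G. Then ℋ_p has cardinality 2^𝔠, where 𝔠 is the cardinality of the continuum. -/
/-- A subgroup `H` of `G = M^ℕ` is *k-controllable* in `G` if for all
`h, h' ∈ H` and every `n ∈ ℕ` there is `g ∈ H` agreeing with `h` on all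
`i ≤ n` and with `h'` on all `i ≥ n + k`. -/
def KControllable {M : Type*} [AddCommGroup M] (k : ℕ)
    (H : AddSubgroup (ℕ → M)) : Prop :=
  ∀ h ∈ H, ∀ h' ∈ H, ∀ n : ℕ, ∃ g ∈ H,
    (∀ i ≤ n, g i = h i) ∧ (∀ i, n + k ≤ i → g i = h' i)

/-- A subgroup `H` of `G = M^ℕ` is *strongly controllable* in `G` if it is
`k`-controllable for some `k ∈ ℕ`. -/
def StronglyControllable {M : Type*} [AddCommGroup M]
    (H : AddSubgroup (ℕ → M)) : Prop :=
  ∃ k : ℕ, KControllable k H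

/-!
Let `R` be a countable nontrivial ring. Split `ℕ` into even coordinates, carrying the pairs
`{2^(2r+1), 2^(2r+2)}`, and odd coordinates, carrying the nodes of the binary tree. For a set `S` of infinite binary sequences (branches) let
`H_S` be the subgroup of `R^ℕ` generated by the indicators of all pairs, all single nodes and all
branches in `S`. Below any level `N`, every generator agrees with an element of `H_S` supported
below `2N`, so `H_S` is uniformly controllable. Every element of `H_S` takes the same value at the
two points of each pair, and the gap inside the `r`-th pair exceeds `r`, so `H_S` is not
`k`-controllable for any `k`. Distinct branches share only finitely many nodes, so the indicator of
a branch lies in `H_S` only if the branch is in `S`. Hence `S ↦ H_S` is injective, giving `2^𝔠`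
such subgroups; there are at most `2^#(R^ℕ) = 2^𝔠` subgroups in all when `R` is countable.
-/

open Set Cardinal

section Controllability

variable {M : Type*} [AddCommGroup M]

theorem uniformlyControllable_of_forall_exists {H : AddSubgroup (ℕ → M)}
    (h : ∀ N, ∃ K, ∀ x ∈ H, ∃ y ∈ H, (∀ n, K < n → y n = 0) ∧ ∀ i ≤ N, y i = x i) :
    UniformlyControllable H := by
  intro J hJ
  obtain ⟨N, hN⟩ := hJ.bddAbove
  obtain ⟨K, hK⟩ := h N
  refine ⟨Iic K, finite_Iic K, (image_mono inter_subset_left).antisymm' ?_⟩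
  rintro _ ⟨x, hx, rfl⟩
  obtain ⟨y, hy, hyK, hyx⟩ := hK x hx
  exact ⟨y, ⟨hy, fun n hn => hyK n (not_le.mp hn)⟩, funext fun j => hyx j (hN j.2)⟩

theorem uniformlyControllable_closure {T : Set (ℕ → M)}
    (h : ∀ N, ∃ K, ∀ x ∈ T, ∃ y ∈ AddSubgroup.closure T,
      (∀ n, K < n → y n = 0) ∧ ∀ i ≤ N, y i = x i) :
    UniformlyControllable (AddSubgroup.closure T) := by
  refine uniformlyControllable_of_forall_exists fun N => ?_
  obtain ⟨K, hK⟩ := h N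
  refine ⟨K, fun x hx => ?_⟩
  induction hx using AddSubgroup.closure_induction with
  | mem x hx => exact hK x hx
  | zero => exact ⟨0, zero_mem _, fun _ _ => rfl, fun _ _ => rfl⟩
  | add x x' _ _ ihx ihx' =>
    obtain ⟨y, hy, hyK, hyx⟩ := ihx
    obtain ⟨y', hy', hyK', hyx'⟩ := ihx'
    exact ⟨y + y', add_mem hy hy', fun n hn => by simp [hyK n hn, hyK' n hn],
      fun i hi => by simp [hyx i hi, hyx' i hi]⟩
  | neg x _ ihx =>
    obtain ⟨y, hy, hyK, hyx⟩ := ihx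
    exact ⟨-y, neg_mem hy, fun n hn => by simp [hyK n hn], fun i hi => by simp [hyx i hi]⟩

theorem not_stronglyControllable_of_linked {H : AddSubgroup (ℕ → M)} (u v : ℕ → ℕ)
    (hgap : ∀ k, u k + k ≤ v k) (hlink : ∀ x ∈ H, ∀ k, x (u k) = x (v k))
    (hne : ∀ k, ∃ x ∈ H, x (u k) ≠ 0) : ¬ StronglyControllable H := by
  rintro ⟨k, hk⟩
  obtain ⟨x, hx, hxk⟩ := hne k
  obtain ⟨y, hy, hyx, hy0⟩ := hk x hx 0 (zero_mem H) (u k)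
  apply hxk
  rw [← hyx (u k) le_rfl, hlink y hy k]
  exact hy0 (v k) (hgap k)

end Controllability

section Indicator

variable {ι R : Type*} [Ring R]

theorem indicator_one_mem_of_finite {H : AddSubgroup (ι → R)} {F : Set ι} (hF : F.Finite)
    (h : ∀ a ∈ F, ({a} : Set ι).indicator 1 ∈ H) : F.indicator 1 ∈ H := by
  induction F, hF using Set.Finite.induction_on with
  | empty => rw [indicator_empty]; exact zero_mem H
  | @insert a F ha _ ih =>
    rw [insert_eq, indicator_union_of_disjoint (disjoint_singleton_left.mpr ha)]
    exact add_mem (h a (mem_insert a F)) (ih fun b hb => h b (mem_insert_of_mem a hb))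

theorem apply_eq_apply_of_mem_closure_indicator {𝒜 : Set (Set ι)} {a b : ι}
    (h𝒜 : ∀ A ∈ 𝒜, a ∈ A ↔ b ∈ A) {x : ι → R}
    (hx : x ∈ AddSubgroup.closure ((fun A => A.indicator 1) '' 𝒜)) : x a = x b := by
  have hle : AddSubgroup.closure ((fun A : Set ι => A.indicator (1 : ι → R)) '' 𝒜) ≤
      (Pi.evalAddMonoidHom (fun _ => R) a - Pi.evalAddMonoidHom (fun _ => R) b).ker := by
    rw [AddSubgroup.closure_le]
    rintro _ ⟨A, hA, rfl⟩
    rw [SetLike.mem_coe, AddMonoidHom.mem_ker, AddMonoidHom.sub_apply, sub_eq_zero]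
    change A.indicator 1 a = A.indicator 1 b
    by_cases ha : a ∈ A
    · rw [indicator_of_mem ha, indicator_of_mem ((h𝒜 A hA).mp ha), Pi.one_apply, Pi.one_apply]
    · rw [indicator_of_notMem ha, indicator_of_notMem (mt (h𝒜 A hA).mpr ha)]
  simpa [sub_eq_zero] using hle hx

def almostVanishingOn (M : Type*) [AddGroup M] (B : Set ι) : AddSubgroup (ι → M) where
  carrier := {x | (B ∩ Function.support x).Finite}
  zero_mem' := by simp
  add_mem' {x y} hx hy := (hx.union hy).subset <| by
    rw [← inter_union_distrib_left]
    exact inter_subset_inter_right B (Function.support_add x y)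
  neg_mem' {x} hx := by simpa using hx

theorem indicator_notMem_closure_indicator [Nontrivial R] {𝒜 : Set (Set ι)} {B : Set ι}
    (hB : B.Infinite) (h𝒜 : ∀ A ∈ 𝒜, (A ∩ B).Finite) :
    B.indicator (1 : ι → R) ∉ AddSubgroup.closure ((fun A => A.indicator 1) '' 𝒜) := by
  have hle : AddSubgroup.closure ((fun A : Set ι => A.indicator (1 : ι → R)) '' 𝒜) ≤
      almostVanishingOn R B := by
    rw [AddSubgroup.closure_le]
    rintro _ ⟨A, hA, rfl⟩
    simpa [almostVanishingOn, inter_comm] using h𝒜 A hA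
  intro hB'
  have := hle hB'
  simp [almostVanishingOn, hB] at this

end Indicator

namespace BranchSubgroup

def pairLo (r : ℕ) : ℕ := 2 ^ (2 * r + 1)

def pairHi (r : ℕ) : ℕ := 2 ^ (2 * r + 2)

def node (l : List Bool) : ℕ := 2 * Encodable.encode l + 1

def branch (s : ℕ → Bool) : Set ℕ := range fun n => node ((List.range n).map s)

def generators (S : Set (ℕ → Bool)) : Set (Set ℕ) :=
  range (fun r => {pairLo r, pairHi r}) ∪ range (fun l => {node l}) ∪ branch '' S

theorem pairHi_eq_two_mul (r : ℕ) : pairHi r = 2 * pairLo r := by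
  rw [pairHi, pairLo, pow_succ, mul_comm]

theorem pairLo_lt_pairHi (r : ℕ) : pairLo r < pairHi r :=
  Nat.pow_lt_pow_right one_lt_two (by omega)

theorem pairLo_add_le_pairHi (r : ℕ) : pairLo r + r ≤ pairHi r := by
  have : r ≤ pairLo r := Nat.lt_two_pow_self.le.trans (Nat.pow_le_pow_right two_pos (by omega))
  rw [pairHi_eq_two_mul]
  omega

theorem pow_two_mem_pair_iff (a r : ℕ) :
    2 ^ a ∈ ({pairLo r, pairHi r} : Set ℕ) ↔ a = 2 * r + 1 ∨ a = 2 * r + 2 := by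
  simp [pairLo, pairHi, (Nat.pow_right_injective le_rfl).eq_iff]

theorem pairLo_mem_pair_iff (k r : ℕ) :
    pairLo k ∈ ({pairLo r, pairHi r} : Set ℕ) ↔ pairHi k ∈ ({pairLo r, pairHi r} : Set ℕ) := by
  rw [show pairLo k = 2 ^ (2 * k + 1) from rfl, show pairHi k = 2 ^ (2 * k + 2) from rfl,
    pow_two_mem_pair_iff, pow_two_mem_pair_iff]
  omega

theorem pairLo_notMem_range_node (r : ℕ) : pairLo r ∉ range node := by
  rintro ⟨l, hl⟩
  have : Even (pairLo r) := Nat.even_pow.mpr ⟨even_two, by omega⟩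
  exact Nat.not_even_iff_odd.mpr ⟨_, rfl⟩ (hl ▸ this)

theorem pairHi_notMem_range_node (r : ℕ) : pairHi r ∉ range node := by
  rintro ⟨l, hl⟩
  have : Even (pairHi r) := pairHi_eq_two_mul r ▸ even_two_mul _
  exact Nat.not_even_iff_odd.mpr ⟨_, rfl⟩ (hl ▸ this)

theorem node_injective : Function.Injective node := fun l l' h =>
  Encodable.encode_injective (by unfold node at h; omega)

theorem branch_subset_range_node (s : ℕ → Bool) : branch s ⊆ range node :=
  range_subset_iff.mpr fun _ => mem_range_self _

theorem branch_infinite (s : ℕ → Bool) : (branch s).Infinite :=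
  infinite_range_of_injective fun n m h => by
    simpa using congrArg List.length (node_injective h)

theorem branch_inter_branch_finite {s t : ℕ → Bool} (hst : s ≠ t) :
    (branch s ∩ branch t).Finite := by
  obtain ⟨i, hi⟩ := Function.ne_iff.mp hst
  refine ((finite_Iic i).image fun n => node ((List.range n).map s)).subset ?_
  rintro _ ⟨⟨n, rfl⟩, ⟨m, hm⟩⟩
  refine ⟨n, mem_Iic.mpr (not_lt.mp fun hin => hi ?_), rfl⟩
  have hnm := node_injective hm
  have : m = n := by simpa using congrArg List.length hnm
  subst this
  exact (List.map_inj_left.mp hnm i (List.mem_range.mpr hin)).symm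

end BranchSubgroup

open BranchSubgroup

section Construction

def branchSubgroup (R : Type*) [Ring R] (S : Set (ℕ → Bool)) : AddSubgroup (ℕ → R) :=
  AddSubgroup.closure ((fun A => A.indicator 1) '' generators S)

variable {R : Type*} [Ring R]

theorem indicator_mem_branchSubgroup {S : Set (ℕ → Bool)} {A : Set ℕ} (hA : A ∈ generators S) :
    A.indicator 1 ∈ branchSubgroup R S :=
  AddSubgroup.subset_closure (mem_image_of_mem _ hA)

theorem branchSubgroup_uniformlyControllable (S : Set (ℕ → Bool)) :
    UniformlyControllable (branchSubgroup R S) := by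
  refine uniformlyControllable_closure fun N => ⟨2 * N, ?_⟩
  have truncate : ∀ A ⊆ range node, ∃ y ∈ branchSubgroup R S,
      (∀ n, 2 * N < n → y n = 0) ∧ ∀ i ≤ N, y i = A.indicator 1 i := by
    intro A hA
    refine ⟨(A ∩ Iic N).indicator 1, ?_, fun n hn => ?_, fun i hi => ?_⟩
    · refine indicator_one_mem_of_finite ((finite_Iic N).inter_of_right A) fun a ha => ?_
      obtain ⟨l, rfl⟩ := hA ha.1
      exact indicator_mem_branchSubgroup (Or.inl (Or.inr (mem_range_self l)))
    · exact indicator_of_notMem (fun h => by have := mem_Iic.mp h.2; omega) _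
    · classical
      simp only [indicator_apply, mem_inter_iff, mem_Iic, hi, and_true]
  rintro _ ⟨A, (⟨⟨r, rfl⟩ | ⟨l, rfl⟩⟩ | ⟨s, -, rfl⟩), rfl⟩
  · have hlt := pairLo_lt_pairHi r
    by_cases hr : pairLo r ≤ N
    · refine ⟨_, indicator_mem_branchSubgroup (Or.inl (Or.inl (mem_range_self r))),
        fun n hn => indicator_of_notMem ?_ _, fun _ _ => rfl⟩
      rw [pairHi_eq_two_mul] at hlt ⊢
      rintro (rfl | rfl) <;> omega
    · refine ⟨0, zero_mem _, fun _ _ => rfl, fun i hi => (indicator_of_notMem ?_ _).symm⟩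
      rintro (rfl | rfl) <;> omega
  · exact truncate _ (singleton_subset_iff.mpr (mem_range_self l))
  · exact truncate _ (branch_subset_range_node s)

theorem branchSubgroup_not_stronglyControllable [Nontrivial R] (S : Set (ℕ → Bool)) :
    ¬ StronglyControllable (branchSubgroup R S) := by
  refine not_stronglyControllable_of_linked pairLo pairHi pairLo_add_le_pairHi
    (fun x hx k => apply_eq_apply_of_mem_closure_indicator ?_ hx) fun k =>
    ⟨_, indicator_mem_branchSubgroup (Or.inl (Or.inl (mem_range_self k))),
    by rw [indicator_of_mem (mem_insert _ _)]; exact one_ne_zero⟩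
  rintro _ (⟨⟨r, rfl⟩ | ⟨l, rfl⟩⟩ | ⟨s, -, rfl⟩)
  · exact pairLo_mem_pair_iff k r
  · exact iff_of_false (fun h => pairLo_notMem_range_node k ⟨l, h.symm⟩)
      fun h => pairHi_notMem_range_node k ⟨l, h.symm⟩
  · exact iff_of_false (fun h => pairLo_notMem_range_node k (branch_subset_range_node s h))
      fun h => pairHi_notMem_range_node k (branch_subset_range_node s h)

theorem branch_indicator_mem_branchSubgroup_iff [Nontrivial R] {S : Set (ℕ → Bool)}
    {s : ℕ → Bool} : (branch s).indicator 1 ∈ branchSubgroup R S ↔ s ∈ S := by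
  refine ⟨fun h => by_contra fun hs => indicator_notMem_closure_indicator (branch_infinite s)
    ?_ h, fun hs => indicator_mem_branchSubgroup (Or.inr (mem_image_of_mem _ hs))⟩
  rintro _ (⟨⟨r, rfl⟩ | ⟨l, rfl⟩⟩ | ⟨t, ht, rfl⟩)
  · exact ((finite_singleton _).insert _).inter_of_left _
  · exact (finite_singleton _).inter_of_left _
  · exact branch_inter_branch_finite (ne_of_mem_of_not_mem ht hs)

theorem branchSubgroup_injective [Nontrivial R] : Function.Injective (branchSubgroup R) :=
  fun S T h => ext fun s => by
    rw [← branch_indicator_mem_branchSubgroup_iff (R := R), h,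
      branch_indicator_mem_branchSubgroup_iff]

end Construction

universe u

theorem mk_nat_arrow_le_continuum (α : Type u) [Countable α] : #(ℕ → α) ≤ 𝔠 := by
  rw [mk_arrow, mk_nat, lift_aleph0, ← aleph0_power_aleph0]
  exact power_le_power_right (lift_le_aleph0.mpr mk_le_aleph0)

theorem mk_uniformlyControllable_not_stronglyControllable (R : Type u) [Ring R] [Nontrivial R]
    [Countable R] :
    #{H : AddSubgroup (ℕ → R) | UniformlyControllable H ∧ ¬ StronglyControllable H} = 2 ^ 𝔠 := by
  refine le_antisymm ?_ ?_
  · calc _ ≤ #(Set (ℕ → R)) := (mk_set_le _).trans (mk_le_of_injective SetLike.coe_injective)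
      _ = 2 ^ #(ℕ → R) := mk_set
      _ ≤ 2 ^ 𝔠 := power_le_power_left two_ne_zero (mk_nat_arrow_le_continuum R)
  · have hinj : Function.Injective fun S => (⟨branchSubgroup R S,
        branchSubgroup_uniformlyControllable S, branchSubgroup_not_stronglyControllable S⟩ :
        {H : AddSubgroup (ℕ → R) | UniformlyControllable H ∧ ¬ StronglyControllable H}) :=
      fun S T h => branchSubgroup_injective (congrArg Subtype.val h)
    have h := lift_mk_le_lift_mk_of_injective hinj
    simp only [mk_set, mk_arrow, mk_bool, mk_nat, lift_ofNat, two_power_aleph0,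
      lift_power, lift_continuum, lift_uzero] at h
    exact h

theorem card_uniformlyControllable_not_stronglyControllable_zmod
    (p : ℕ) (hp : p.Prime) :
    Cardinal.mk {H : AddSubgroup (ℕ → ZMod p) |
        UniformlyControllable H ∧ ¬ StronglyControllable H} =
      2 ^ Cardinal.continuum := by
  have : Fact (1 < p) := ⟨hp.one_lt⟩
  have : NeZero p := ⟨hp.ne_zero⟩
  exact mk_uniformlyControllable_not_stronglyControllable (ZMod p)
end
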